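/- arXiv:1808.07622 — 5 statements merged into one kernel-verified Lean document; each statement's English description precedes it below -/
import Mathlib

section
/- Let X be a real Banach space in which every bounded sequence admits a weakly convergent subsequence (as holds when X is reflexive). Let Φ : X → ℝ be continuously Fréchet differentiable and coercive, and suppose Φ' = A + B, where A : X → X* is of type (S)₊ and B : X → X* is continuous and maps bounded sets to relatively compact sets. Then Φ satisfies the Palais–Smale condition: every sequence (xₙ) ⊆ X such that (Φ(xₙ)) is bounded and ‖Φ'(xₙ)‖_{X*} → 0 has a strongly convergent subsequence. -/
open Filter Topology Bornology Set

/-!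
Coercivity makes a Palais–Smale sequence bounded, so a subsequence converges weakly to some `x`
and, by compactness of `B`, the values `B (uₙ)` converge in norm along a further subsequence.
Testing `Φ' (uₙ) = A (uₙ) + B (uₙ)` against the bounded, weakly null sequence `uₙ - x` then gives
`A (uₙ) (uₙ - x) → 0`, and the (S)₊ property upgrades weak to strong convergence.
-/

theorem Filter.Tendsto.isBounded_preimage_Iic {α : Type*} [Bornology α] {f : α → ℝ}
    (hf : Tendsto f (cobounded α) atTop) (M : ℝ) : Bornology.IsBounded (f ⁻¹' Iic M) := by
  rw [isBounded_def]
  filter_upwards [hf.eventually (eventually_gt_atTop M)] with x hx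
  exact not_le.2 hx

theorem exists_subseq_tendsto_of_isCompact_closure_image {X Y : Type*} [Bornology X]
    [TopologicalSpace Y] [FirstCountableTopology Y] {B : X → Y}
    (hB : ∀ s : Set X, IsBounded s → IsCompact (closure (B '' s)))
    {u : ℕ → X} (hu : IsBounded (range u)) :
    ∃ g : Y, ∃ τ : ℕ → ℕ, StrictMono τ ∧ Tendsto (B ∘ u ∘ τ) atTop (𝓝 g) := by
  obtain ⟨g, -, τ, hτ, hg⟩ := (hB _ hu).tendsto_subseq fun n =>
    subset_closure (mem_image_of_mem B (mem_range_self n))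
  exact ⟨g, τ, hτ, hg⟩

theorem tendsto_apply_zero_of_tendsto_of_norm_le {𝕜 E F : Type*} [NontriviallyNormedField 𝕜]
    [SeminormedAddCommGroup E] [NormedSpace 𝕜 E] [SeminormedAddCommGroup F] [NormedSpace 𝕜 F]
    {ℓ : ℕ → E →L[𝕜] F} {g : E →L[𝕜] F} (hℓ : Tendsto ℓ atTop (𝓝 g))
    {w : ℕ → E} {C : ℝ} (hw : ∀ n, ‖w n‖ ≤ C) (hgw : Tendsto (fun n => g (w n)) atTop (𝓝 0)) :
    Tendsto (fun n => ℓ n (w n)) atTop (𝓝 0) := by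
  have hdiff : Tendsto (fun n => (ℓ n - g) (w n)) atTop (𝓝 0) := by
    refine squeeze_zero_norm (fun n => ?_) (by
      simpa using (tendsto_iff_norm_sub_tendsto_zero.1 hℓ).mul_const C)
    calc ‖(ℓ n - g) (w n)‖ ≤ ‖ℓ n - g‖ * ‖w n‖ := (ℓ n - g).le_opNorm _
      _ ≤ ‖ℓ n - g‖ * C := by gcongr; exact hw n
  simpa using hdiff.add hgw

section SPlus

variable {X : Type*} [SeminormedAddCommGroup X] [NormedSpace ℝ X]

def WeakTendsto (u : ℕ → X) (x : X) : Prop :=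
  ∀ f : X →L[ℝ] ℝ, Tendsto (fun n => f (u n)) atTop (𝓝 (f x))

def IsTypeSPlus (A : X → X →L[ℝ] ℝ) : Prop :=
  ∀ (u : ℕ → X) (x : X), WeakTendsto u x →
    limsup (fun n => A (u n) (u n - x)) atTop ≤ 0 → Tendsto u atTop (𝓝 x)

theorem IsTypeSPlus.tendsto_of_add_tendsto_zero {A B : X → X →L[ℝ] ℝ} (hA : IsTypeSPlus A)
    {v : ℕ → X} {x : X} {C : ℝ} (hv : WeakTendsto v x) (hvC : ∀ n, ‖v n‖ ≤ C)
    (hAB : Tendsto (fun n => A (v n) + B (v n)) atTop (𝓝 0))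
    {g : X →L[ℝ] ℝ} (hB : Tendsto (fun n => B (v n)) atTop (𝓝 g)) :
    Tendsto v atTop (𝓝 x) := by
  have hw : ∀ n, ‖v n - x‖ ≤ C + ‖x‖ := fun n =>
    (norm_sub_le _ _).trans (add_le_add_left (hvC n) _)
  have hweak_null : ∀ f : X →L[ℝ] ℝ, Tendsto (fun n => f (v n - x)) atTop (𝓝 0) := fun f => by
    simpa using (hv f).sub_const (f x)
  have hsum := tendsto_apply_zero_of_tendsto_of_norm_le hAB hw (hweak_null 0)
  have hBw := tendsto_apply_zero_of_tendsto_of_norm_le hB hw (hweak_null g)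
  have hAw : Tendsto (fun n => A (v n) (v n - x)) atTop (𝓝 0) := by
    simpa using hsum.sub hBw
  exact hA v x hv hAw.limsup_eq.le

end SPlus

theorem stmt_0_general
    {X : Type*} [NormedAddCommGroup X] [NormedSpace ℝ X]
    -- every bounded sequence admits a weakly convergent subsequence
    (hweak : ∀ u : ℕ → X, (∃ M : ℝ, ∀ n, ‖u n‖ ≤ M) →
      ∃ (σ : ℕ → ℕ) (x : X), StrictMono σ ∧
        ∀ f : X →L[ℝ] ℝ, Filter.Tendsto (fun n => f (u (σ n))) Filter.atTop (nhds (f x)))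
    (Φ : X → ℝ) (Φ' : X → (X →L[ℝ] ℝ))
    -- Φ is coercive
    (hcoercive : Filter.Tendsto Φ (Filter.comap norm Filter.atTop) Filter.atTop)
    (A B : X → (X →L[ℝ] ℝ))
    (hAB : ∀ x : X, Φ' x = A x + B x)
    -- A is of type (S)₊
    (hA : ∀ (u : ℕ → X) (x : X),
      (∀ f : X →L[ℝ] ℝ, Filter.Tendsto (fun n => f (u n)) Filter.atTop (nhds (f x))) →
      Filter.limsup (fun n => A (u n) (u n - x)) Filter.atTop ≤ 0 →
      Filter.Tendsto u Filter.atTop (nhds x))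
    -- B is continuous and maps bounded sets to relatively compact sets
    (hBcompact : ∀ s : Set X, Bornology.IsBounded s → IsCompact (closure (B '' s))) :
    -- Palais–Smale condition
    ∀ u : ℕ → X, (∃ M : ℝ, ∀ n, |Φ (u n)| ≤ M) →
      Filter.Tendsto (fun n => ‖Φ' (u n)‖) Filter.atTop (nhds 0) →
      ∃ (σ : ℕ → ℕ) (x : X), StrictMono σ ∧
        Filter.Tendsto (fun n => u (σ n)) Filter.atTop (nhds x) := by
  rintro u ⟨M, hM⟩ hΦ'
  rw [comap_norm_atTop] at hcoercive
  have hu : IsBounded (range u) := (hcoercive.isBounded_preimage_Iic M).subset <|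
    range_subset_iff.2 fun n => (abs_le.1 (hM n)).2
  obtain ⟨R, hR⟩ := isBounded_iff_forall_norm_le.1 hu
  obtain ⟨σ, x, hσ, hx⟩ := hweak u ⟨R, fun n => hR _ (mem_range_self n)⟩
  obtain ⟨g, τ, hτ, hg⟩ := exists_subseq_tendsto_of_isCompact_closure_image hBcompact
    (hu.subset (range_comp_subset_range σ u))
  refine ⟨σ ∘ τ, x, hσ.comp hτ, IsTypeSPlus.tendsto_of_add_tendsto_zero hA
    (fun f => (hx f).comp hτ.tendsto_atTop) (fun n => hR _ (mem_range_self _)) ?_ hg⟩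
  simpa [← hAB, tendsto_zero_iff_norm_tendsto_zero] using
    hΦ'.comp (hσ.comp hτ).tendsto_atTop

/-- Let `X` be a real Banach space in which every bounded sequence admits a
weakly convergent subsequence. Let `Φ : X → ℝ` be continuously Fréchet differentiable and
coercive, with `Φ' = A + B`, where `A` is of type (S)₊ and `B` is continuous and maps bounded
sets to relatively compact sets. Then `Φ` satisfies the Palais–Smale condition. -/
theorem stmt_0
    {X : Type*} [NormedAddCommGroup X] [NormedSpace ℝ X] [CompleteSpace X]
    -- every bounded sequence admits a weakly convergent subsequence
    (hweak : ∀ u : ℕ → X, (∃ M : ℝ, ∀ n, ‖u n‖ ≤ M) →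
      ∃ (σ : ℕ → ℕ) (x : X), StrictMono σ ∧
        ∀ f : X →L[ℝ] ℝ, Filter.Tendsto (fun n => f (u (σ n))) Filter.atTop (nhds (f x)))
    (Φ : X → ℝ) (Φ' : X → (X →L[ℝ] ℝ))
    -- Φ is continuously Fréchet differentiable with derivative Φ'
    (hderiv : ∀ x : X, HasFDerivAt Φ (Φ' x) x)
    (hderivCont : Continuous Φ')
    -- Φ is coercive
    (hcoercive : Filter.Tendsto Φ (Filter.comap norm Filter.atTop) Filter.atTop)
    (A B : X → (X →L[ℝ] ℝ))
    (hAB : ∀ x : X, Φ' x = A x + B x)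
    -- A is of type (S)₊
    (hA : ∀ (u : ℕ → X) (x : X),
      (∀ f : X →L[ℝ] ℝ, Filter.Tendsto (fun n => f (u n)) Filter.atTop (nhds (f x))) →
      Filter.limsup (fun n => A (u n) (u n - x)) Filter.atTop ≤ 0 →
      Filter.Tendsto u Filter.atTop (nhds x))
    -- B is continuous and maps bounded sets to relatively compact sets
    (hBcont : Continuous B)
    (hBcompact : ∀ s : Set X, Bornology.IsBounded s → IsCompact (closure (B '' s))) :
    -- Palais–Smale condition
    ∀ u : ℕ → X, (∃ M : ℝ, ∀ n, |Φ (u n)| ≤ M) →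
      Filter.Tendsto (fun n => ‖Φ' (u n)‖) Filter.atTop (nhds 0) →
      ∃ (σ : ℕ → ℕ) (x : X), StrictMono σ ∧
        Filter.Tendsto (fun n => u (σ n)) Filter.atTop (nhds x) :=
  stmt_0_general hweak Φ Φ' hcoercive A B hAB hA hBcompact
end

section
/- Let N ≥ 1 and let a₀ : (0,∞) → (0,∞) be continuous with t ↦ t·a₀(t) strictly increasing on (0,∞) and lim_{t→0⁺} t·a₀(t) = 0. Define a : ℝ^N → ℝ^N by a(ξ) = a₀(|ξ|)ξ for ξ ≠ 0 and a(0) = 0. Then a is continuous on ℝ^N and strictly monotone: ⟨a(ξ) − a(ζ), ξ − ζ⟩ > 0 for all ξ, ζ ∈ ℝ^N with ξ ≠ ζ. -/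
/-!
Write `a ξ = g ‖ξ‖ • ξ`. Away from `0` continuity is inherited from `g`, and at `0` the norm
of `a ξ` is `‖ξ‖ · g ‖ξ‖ → 0`. Monotonicity rests on the identity
`⟪α x - β y, x - y⟫ = (α‖x‖ - β‖y‖)(‖x‖ - ‖y‖) + (α + β)(‖x‖‖y‖ - ⟪x, y⟫)`:
the first term is positive when the norms differ because `t ↦ t g t` is strictly increasing,
and the second is positive when they agree by the equality case of Cauchy–Schwarz.
-/

open Set Filter Topology
open scoped RealInnerProductSpace

def radial {E : Type*} [Norm E] [SMul ℝ E] (g : ℝ → ℝ) (x : E) : E := g ‖x‖ • x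

section Continuity

variable {E : Type*} [NormedAddCommGroup E] [NormedSpace ℝ E]

@[simp]
theorem radial_zero (g : ℝ → ℝ) : radial g (0 : E) = 0 := smul_zero _

theorem continuous_radial {g : ℝ → ℝ} (hcont : ContinuousOn g (Ioi 0))
    (hlim : Tendsto (fun t => t * g t) (𝓝[>] 0) (𝓝 0)) : Continuous (radial g : E → E) := by
  rw [continuous_iff_continuousAt]
  intro x
  rcases eq_or_ne x 0 with rfl | hx
  · rw [← continuousWithinAt_compl_self, ContinuousWithinAt, radial_zero,
      tendsto_zero_iff_norm_tendsto_zero]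
    simpa [radial, norm_smul, mul_comm] using (hlim.comp (tendsto_norm_nhdsNE_zero (E := E))).norm
  · have hg : ContinuousAt g ‖x‖ := hcont.continuousAt (Ioi_mem_nhds (norm_pos_iff.2 hx))
    exact (hg.comp continuous_norm.continuousAt).smul continuousAt_id

end Continuity

section Monotonicity

variable {E : Type*} [NormedAddCommGroup E] [InnerProductSpace ℝ E]

theorem inner_smul_sub_smul_sub_eq (α β : ℝ) (x y : E) :
    ⟪α • x - β • y, x - y⟫ =
      (α * ‖x‖ - β * ‖y‖) * (‖x‖ - ‖y‖) + (α + β) * (‖x‖ * ‖y‖ - ⟪x, y⟫) := by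
  simp only [inner_sub_left, inner_sub_right, real_inner_smul_left, real_inner_self_eq_norm_sq,
    real_inner_comm x y]
  ring

theorem inner_smul_sub_smul_sub_pos {x y : E} (hxy : x ≠ y) {α β : ℝ} (hα : 0 < α)
    (hβ : 0 < β) (hlt : ‖x‖ < ‖y‖ → α * ‖x‖ < β * ‖y‖)
    (hgt : ‖y‖ < ‖x‖ → β * ‖y‖ < α * ‖x‖) : 0 < ⟪α • x - β • y, x - y⟫ := by
  rw [inner_smul_sub_smul_sub_eq]
  have hαβ : 0 < α + β := add_pos hα hβ
  have hcs : 0 ≤ ‖x‖ * ‖y‖ - ⟪x, y⟫ := sub_nonneg.2 (real_inner_le_norm x y)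
  rcases lt_trichotomy ‖x‖ ‖y‖ with h | h | h
  · exact add_pos_of_pos_of_nonneg (mul_pos_of_neg_of_neg (sub_neg.2 (hlt h)) (sub_neg.2 h))
      (mul_nonneg hαβ.le hcs)
  · have hy : ‖y‖ ≠ 0 := fun hy => hxy (by rw [norm_eq_zero.1 (h.trans hy), norm_eq_zero.1 hy])
    have hcs' : ⟪x, y⟫ < ‖x‖ * ‖y‖ := by
      rw [inner_lt_norm_mul_iff_real, h]
      exact fun hsmul => hxy (smul_right_injective E hy hsmul)
    rw [h, sub_self, mul_zero, zero_add]
    exact mul_pos hαβ (sub_pos.2 (h ▸ hcs'))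
  · exact add_pos_of_pos_of_nonneg (mul_pos (sub_pos.2 (hgt h)) (sub_pos.2 h))
      (mul_nonneg hαβ.le hcs)

theorem inner_radial_sub_radial_pos {g : ℝ → ℝ} (hpos : ∀ t ∈ Ioi (0 : ℝ), 0 < g t)
    (hmono : StrictMonoOn (fun t => t * g t) (Ioi 0)) {x y : E} (hxy : x ≠ y) :
    0 < ⟪radial g x - radial g y, x - y⟫ := by
  rcases eq_or_ne y 0 with rfl | hy
  · have hx := norm_pos_iff.2 hxy
    simpa [radial, real_inner_smul_left] using mul_pos (hpos _ hx) (pow_pos hx 2)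
  rcases eq_or_ne x 0 with rfl | hx
  · have hy' := norm_pos_iff.2 hy
    simpa [radial, real_inner_smul_left] using mul_pos (hpos _ hy') (pow_pos hy' 2)
  have hx' := norm_pos_iff.2 hx
  have hy' := norm_pos_iff.2 hy
  exact inner_smul_sub_smul_sub_pos hxy (hpos _ hx') (hpos _ hy')
    (fun h => by simpa only [mul_comm] using hmono hx' hy' h)
    (fun h => by simpa only [mul_comm] using hmono hy' hx' h)

end Monotonicity

theorem stmt_1_general
    (N : ℕ)
    (a₀ : ℝ → ℝ)
    (ha₀pos : ∀ t ∈ Set.Ioi (0 : ℝ), 0 < a₀ t)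
    (ha₀cont : ContinuousOn a₀ (Set.Ioi (0 : ℝ)))
    (hmono : StrictMonoOn (fun t => t * a₀ t) (Set.Ioi (0 : ℝ)))
    (hlim : Filter.Tendsto (fun t => t * a₀ t) (nhdsWithin 0 (Set.Ioi (0 : ℝ))) (nhds 0))
    (a : EuclideanSpace ℝ (Fin N) → EuclideanSpace ℝ (Fin N))
    (ha : ∀ ξ : EuclideanSpace ℝ (Fin N), ξ ≠ 0 → a ξ = a₀ ‖ξ‖ • ξ)
    (ha0 : a 0 = 0) :
    Continuous a ∧
      ∀ ξ ζ : EuclideanSpace ℝ (Fin N), ξ ≠ ζ → 0 < ⟪a ξ - a ζ, ξ - ζ⟫ := by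
  have ha_radial : a = radial a₀ := by
    funext ξ
    rcases eq_or_ne ξ 0 with rfl | hξ
    · rw [ha0, radial_zero]
    · exact ha ξ hξ
  subst ha_radial
  exact ⟨continuous_radial ha₀cont hlim, fun _ _ => inner_radial_sub_radial_pos ha₀pos hmono⟩

/-- Let `N ≥ 1` and let `a₀ : (0,∞) → (0,∞)` be continuous with
`t ↦ t·a₀(t)` strictly increasing on `(0,∞)` and `lim_{t→0⁺} t·a₀(t) = 0`. Define
`a(ξ) = a₀(|ξ|)ξ` for `ξ ≠ 0` and `a(0) = 0`. Then `a` is continuous on `ℝ^N` and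
strictly monotone: `⟨a(ξ) − a(ζ), ξ − ζ⟩ > 0` whenever `ξ ≠ ζ`. -/
theorem stmt_1
    (N : ℕ) (hN : 1 ≤ N)
    (a₀ : ℝ → ℝ)
    (ha₀pos : ∀ t ∈ Set.Ioi (0 : ℝ), 0 < a₀ t)
    (ha₀cont : ContinuousOn a₀ (Set.Ioi (0 : ℝ)))
    (hmono : StrictMonoOn (fun t => t * a₀ t) (Set.Ioi (0 : ℝ)))
    (hlim : Filter.Tendsto (fun t => t * a₀ t) (nhdsWithin 0 (Set.Ioi (0 : ℝ))) (nhds 0))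
    (a : EuclideanSpace ℝ (Fin N) → EuclideanSpace ℝ (Fin N))
    (ha : ∀ ξ : EuclideanSpace ℝ (Fin N), ξ ≠ 0 → a ξ = a₀ ‖ξ‖ • ξ)
    (ha0 : a 0 = 0) :
    Continuous a ∧
      ∀ ξ ζ : EuclideanSpace ℝ (Fin N), ξ ≠ ζ → 0 < ⟪a ξ - a ζ, ξ - ζ⟫ :=
  stmt_1_general N a₀ ha₀pos ha₀cont hmono hlim a ha ha0
end

section
/- Let N ≥ 1, 1 < p < ∞, and c₃ > 0. Let a : ℝ^N → ℝ^N be continuous with a(0) = 0 and differentiable on ℝ^N \ {0}, and suppose ⟨Da(ξ)y, y⟩ ≥ c₃|ξ|^{p−2}|y|² for all ξ ∈ ℝ^N \ {0} and all y ∈ ℝ^N. Then ⟨a(ξ), ξ⟩ ≥ (c₃/(p−1))·|ξ|^p for every ξ ∈ ℝ^N. -/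
/-!
Along the ray `t ↦ t • ξ`, the function `t ↦ ⟪a (t • ξ), ξ⟫` has derivative `⟪Da (t • ξ) ξ, ξ⟫`,
which by the ellipticity bound and homogeneity of the norm is at least `c₃ t^{p-2} |ξ|^p`, the
derivative of `c₃ |ξ|^p t^{p-1} / (p-1)`. Both functions vanish at `t = 0` (using `a 0 = 0` and
`p > 1`), so comparing them at `t = 1` gives the claim.
-/

open scoped RealInnerProductSpace

open Set Real

theorem sub_le_sub_of_hasDerivAt_le {f g f' g' : ℝ → ℝ} {a b : ℝ} (hab : a ≤ b)
    (hf : ContinuousOn f (Icc a b)) (hg : ContinuousOn g (Icc a b))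
    (hf' : ∀ t ∈ Ioo a b, HasDerivAt f (f' t) t) (hg' : ∀ t ∈ Ioo a b, HasDerivAt g (g' t) t)
    (hle : ∀ t ∈ Ioo a b, g' t ≤ f' t) : g b - g a ≤ f b - f a := by
  have hmono : MonotoneOn (f - g) (Icc a b) := by
    refine monotoneOn_of_hasDerivWithinAt_nonneg (f' := f' - g') (convex_Icc a b) (hf.sub hg)
      (fun t ht => ?_) (fun t ht => ?_) <;> rw [interior_Icc] at ht
    · exact ((hf' t ht).sub (hg' t ht)).hasDerivWithinAt
    · exact sub_nonneg.2 (hle t ht)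
  have := hmono (left_mem_Icc.2 hab) (right_mem_Icc.2 hab) hab
  simp only [Pi.sub_apply] at this
  linarith

theorem HasFDerivAt.hasDerivAt_inner_smul_left {E : Type*} [NormedAddCommGroup E]
    [InnerProductSpace ℝ E] {a : E → E} {A : E →L[ℝ] E} {ξ : E} {t : ℝ}
    (h : HasFDerivAt a A (t • ξ)) : HasDerivAt (fun s : ℝ => ⟪a (s • ξ), ξ⟫) ⟪A ξ, ξ⟫ t := by
  have hray : HasDerivAt (fun s : ℝ => s • ξ) ξ t := by
    simpa using (hasDerivAt_id t).smul_const ξ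
  simpa using (h.comp_hasDerivAt t hray).inner ℝ (hasDerivAt_const t ξ)

theorem hasDerivAt_rpow_sub_one_div {p t : ℝ} (hp : p ≠ 1) (ht : t ≠ 0) :
    HasDerivAt (fun s : ℝ => s ^ (p - 1) / (p - 1)) (t ^ (p - 2)) t := by
  have h := (hasDerivAt_rpow_const (p := p - 1) (Or.inl ht)).div_const (p - 1)
  refine h.congr_deriv ?_
  rw [mul_div_cancel_left₀ _ (sub_ne_zero.2 hp)]
  ring_nf

theorem norm_smul_rpow_sub_two_mul_sq {E : Type*} [NormedAddCommGroup E] [NormedSpace ℝ E]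
    {t p : ℝ} (ht : 0 ≤ t) {ξ : E} (hξ : ξ ≠ 0) :
    ‖t • ξ‖ ^ (p - 2) * ‖ξ‖ ^ 2 = t ^ (p - 2) * ‖ξ‖ ^ p := by
  have hξ' : 0 < ‖ξ‖ := norm_pos_iff.2 hξ
  rw [norm_smul, norm_of_nonneg ht, mul_rpow ht hξ'.le, mul_assoc, ← rpow_natCast,
    ← rpow_add hξ']
  norm_num

theorem stmt_3_general
    (N : ℕ)
    (p c₃ : ℝ) (hp : 1 < p)
    (a : EuclideanSpace ℝ (Fin N) → EuclideanSpace ℝ (Fin N))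
    (hacont : Continuous a) (ha0 : a 0 = 0)
    (Da : EuclideanSpace ℝ (Fin N) → (EuclideanSpace ℝ (Fin N) →L[ℝ] EuclideanSpace ℝ (Fin N)))
    (hDa : ∀ ξ : EuclideanSpace ℝ (Fin N), ξ ≠ 0 → HasFDerivAt a (Da ξ) ξ)
    (hDabound : ∀ ξ : EuclideanSpace ℝ (Fin N), ξ ≠ 0 →
      ∀ y : EuclideanSpace ℝ (Fin N), c₃ * ‖ξ‖ ^ (p - 2) * ‖y‖ ^ 2 ≤ ⟪Da ξ y, y⟫) :
    ∀ ξ : EuclideanSpace ℝ (Fin N), c₃ / (p - 1) * ‖ξ‖ ^ p ≤ ⟪a ξ, ξ⟫ := by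
  intro ξ
  rcases eq_or_ne ξ 0 with rfl | hξ
  · simp [zero_rpow (by positivity : p ≠ 0)]
  have hray : ∀ t ∈ Ioo (0 : ℝ) 1, t • ξ ≠ 0 := fun t ht => smul_ne_zero ht.1.ne' hξ
  have key := sub_le_sub_of_hasDerivAt_le zero_le_one
    (f := fun t => ⟪a (t • ξ), ξ⟫) (g := fun t => c₃ * ‖ξ‖ ^ p * (t ^ (p - 1) / (p - 1)))
    (by fun_prop)
    (continuous_const.mul ((continuous_rpow_const (by linarith)).div_const _)).continuousOn
    (fun t ht => (hDa _ (hray t ht)).hasDerivAt_inner_smul_left)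
    (fun t ht => (hasDerivAt_rpow_sub_one_div hp.ne' ht.1.ne').const_mul _)
    (fun t ht => by
      have := hDabound _ (hray t ht) ξ
      rw [mul_assoc, norm_smul_rpow_sub_two_mul_sq ht.1.le hξ] at this
      linarith)
  simp only [zero_smul, ha0, inner_zero_left, one_smul, one_rpow,
    zero_rpow (sub_pos.2 hp).ne', zero_div, mul_zero, sub_zero] at key
  linarith [show c₃ / (p - 1) * ‖ξ‖ ^ p = c₃ * ‖ξ‖ ^ p * (1 / (p - 1)) by ring]

/-- Let `N ≥ 1`, `1 < p < ∞`, `c₃ > 0`. Let `a : ℝ^N → ℝ^N` be continuous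
with `a(0) = 0`, differentiable away from `0`, and suppose
`⟨Da(ξ)y, y⟩ ≥ c₃|ξ|^{p−2}|y|²` for all `ξ ≠ 0` and all `y`. Then
`⟨a(ξ), ξ⟩ ≥ (c₃/(p−1))·|ξ|^p` for every `ξ`. -/
theorem stmt_3
    (N : ℕ) (hN : 1 ≤ N)
    (p c₃ : ℝ) (hp : 1 < p) (hc₃ : 0 < c₃)
    (a : EuclideanSpace ℝ (Fin N) → EuclideanSpace ℝ (Fin N))
    (hacont : Continuous a) (ha0 : a 0 = 0)
    (Da : EuclideanSpace ℝ (Fin N) → (EuclideanSpace ℝ (Fin N) →L[ℝ] EuclideanSpace ℝ (Fin N)))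
    (hDa : ∀ ξ : EuclideanSpace ℝ (Fin N), ξ ≠ 0 → HasFDerivAt a (Da ξ) ξ)
    (hDabound : ∀ ξ : EuclideanSpace ℝ (Fin N), ξ ≠ 0 →
      ∀ y : EuclideanSpace ℝ (Fin N), c₃ * ‖ξ‖ ^ (p - 2) * ‖y‖ ^ 2 ≤ ⟪Da ξ y, y⟫) :
    ∀ ξ : EuclideanSpace ℝ (Fin N), c₃ / (p - 1) * ‖ξ‖ ^ p ≤ ⟪a ξ, ξ⟫ :=
  stmt_3_general N p c₃ hp a hacont ha0 Da hDa hDabound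
end

section
/- Let g : [0,1] → ℝ be continuous with g(0) = 0 and differentiable at every point of (0,1]. Suppose there exists t* ∈ (0,1) such that g(t) < 0 for all t ∈ (0,t*), and suppose g'(t₀) > 0 for every t₀ ∈ (0,1] with g(t₀) = 0. Then there exists a unique t₁ ∈ (0,1] such that g(t) < 0 for all t ∈ (0,t₁) and g(t) > 0 for all t ∈ (t₁,1]. -/
open Set Filter Topology

/-!
At a zero with positive derivative, `g` passes from negative to positive values. Hence, by real
induction along `[a, b]`, once `g` vanishes at `a` the set `{0 ≤ g}` fills `[a, b]`, and `g` is
even positive on `(a, b]` since a zero there would be preceded by negative values. So `t₁` is the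
first zero of `g` after `t* / 2` (or `1` if there is none): before it `g` stays negative by the
intermediate value theorem, after it `g` is positive.
-/

section SignChange

variable {g : ℝ → ℝ} {a b x₀ : ℝ}

lemma eventually_pos_nhdsGT_of_deriv_pos (hd : 0 < deriv g x₀) (h0 : g x₀ = 0) :
    ∀ᶠ x in 𝓝[>] x₀, 0 < g x := by
  filter_upwards [nhdsWithin_le_nhds (eventually_nhdsWithin_sign_eq_of_deriv_pos hd h0),
    self_mem_nhdsWithin] with x hsign hx
  rwa [sign_pos (sub_pos.mpr hx), sign_eq_one_iff] at hsign

lemma eventually_neg_nhdsLT_of_deriv_pos (hd : 0 < deriv g x₀) (h0 : g x₀ = 0) :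
    ∀ᶠ x in 𝓝[<] x₀, g x < 0 := by
  filter_upwards [nhdsWithin_le_nhds (eventually_nhdsWithin_sign_eq_of_deriv_pos hd h0),
    self_mem_nhdsWithin] with x hsign hx
  rwa [sign_neg (sub_neg.mpr hx), sign_eq_neg_one_iff] at hsign

lemma pos_of_deriv_pos_at_zeros (hg : ContinuousOn g (Icc a b)) (ha : g a = 0)
    (hd : ∀ t ∈ Icc a b, g t = 0 → 0 < deriv g t) : ∀ t ∈ Ioc a b, 0 < g t := by
  have hnonneg : Icc a b ⊆ {t | 0 ≤ g t} := by
    refine IsClosed.Icc_subset_of_forall_mem_nhdsWithin ?_ ha.ge ?_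
    · rw [inter_comm]
      exact hg.preimage_isClosed_of_isClosed isClosed_Icc isClosed_Ici
    rintro x ⟨hx0 : 0 ≤ g x, hx⟩
    rcases hx0.eq_or_lt with hzero | hpos
    · filter_upwards [eventually_pos_nhdsGT_of_deriv_pos
        (hd x (Ico_subset_Icc_self hx) hzero.symm) hzero.symm] with t ht using ht.le
    · filter_upwards [nhdsWithin_le_of_mem (Icc_mem_nhdsGT_of_mem hx)
        ((hg x (Ico_subset_Icc_self hx)).eventually (lt_mem_nhds hpos))] with t ht using ht.le
  intro t ht
  refine (hnonneg (Ioc_subset_Icc_self ht)).lt_of_ne fun hzero => ?_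
  obtain ⟨s, hneg, hs⟩ := ((eventually_neg_nhdsLT_of_deriv_pos
    (hd t (Ioc_subset_Icc_self ht) hzero.symm) hzero.symm).and
    (Ioo_mem_nhdsLT ht.1)).exists
  exact (hneg.trans_le (hnonneg ⟨hs.1.le, hs.2.le.trans ht.2⟩)).false

lemma neg_on_Ico_of_ne_zero (hg : ContinuousOn g (Icc a b)) (ha : g a < 0)
    (hne : ∀ t ∈ Ico a b, g t ≠ 0) : ∀ t ∈ Ico a b, g t < 0 := by
  intro t ht
  by_contra! hnonneg
  obtain ⟨s, hs, hzero⟩ := intermediate_value_Icc ht.1 (hg.mono (Icc_subset_Icc_right ht.2.le))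
    ⟨ha.le, hnonneg⟩
  exact hne s ⟨hs.1, hs.2.trans_lt ht.2⟩ hzero

lemma exists_sign_change (hab : a < b) (hg : ContinuousOn g (Icc a b)) (ha : g a < 0)
    (hd : ∀ t ∈ Ioc a b, g t = 0 → 0 < deriv g t) :
    ∃ t₁ ∈ Ioc a b, (∀ t ∈ Ico a t₁, g t < 0) ∧ ∀ t ∈ Ioc t₁ b, 0 < g t := by
  set Z := {t ∈ Icc a b | g t = 0}
  have hZa : ∀ t ∈ Z, a < t := fun t ht => ht.1.1.lt_of_ne (by rintro rfl; exact ha.ne ht.2)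
  rcases Z.eq_empty_or_nonempty with hZ | hZ
  · refine ⟨b, ⟨hab, le_rfl⟩, ?_, by simp⟩
    exact neg_on_Ico_of_ne_zero hg ha fun t ht hzero =>
      hZ.subset ⟨Ico_subset_Icc_self ht, hzero⟩
  · have hZclosed : IsClosed Z := hg.preimage_isClosed_of_isClosed isClosed_Icc isClosed_singleton
    have ht₁ : sInf Z ∈ Z := hZclosed.csInf_mem hZ ⟨a, fun t ht => ht.1.1⟩
    refine ⟨sInf Z, ⟨hZa _ ht₁, ht₁.1.2⟩, ?_, ?_⟩
    · refine neg_on_Ico_of_ne_zero (hg.mono (Icc_subset_Icc_right ht₁.1.2)) ha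
        fun t ht hzero => ?_
      exact ht.2.not_ge (csInf_le ⟨a, fun t ht => ht.1.1⟩ ⟨⟨ht.1, ht.2.le.trans ht₁.1.2⟩, hzero⟩)
    · exact pos_of_deriv_pos_at_zeros (hg.mono (Icc_subset_Icc_left ht₁.1.1)) ht₁.2
        fun t ht => hd t ⟨(hZa _ ht₁).trans_le ht.1, ht.2⟩

lemma eq_of_sign_change {t₁ t₂ : ℝ} (ht₁ : t₁ ∈ Ioc a b) (ht₂ : t₂ ∈ Ioc a b)
    (hneg₁ : ∀ t ∈ Ioo a t₁, g t < 0) (hpos₁ : ∀ t ∈ Ioc t₁ b, 0 < g t)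
    (hneg₂ : ∀ t ∈ Ioo a t₂, g t < 0) (hpos₂ : ∀ t ∈ Ioc t₂ b, 0 < g t) : t₁ = t₂ := by
  wlog h : t₁ ≤ t₂ generalizing t₁ t₂
  · exact (this ht₂ ht₁ hneg₂ hpos₂ hneg₁ hpos₁ (le_of_not_ge h)).symm
  refine h.antisymm (not_lt.mp fun h => ?_)
  obtain ⟨m, hm₁, hm₂⟩ := exists_between h
  exact (hneg₂ m ⟨ht₁.1.trans hm₁, hm₂⟩).not_gt (hpos₁ m ⟨hm₁, hm₂.le.trans ht₂.2⟩)

end SignChange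

theorem stmt_7_general
    (g : ℝ → ℝ)
    (hgcont : ContinuousOn g (Set.Icc (0 : ℝ) 1))
    (tstar : ℝ) (htstar : tstar ∈ Set.Ioo (0 : ℝ) 1)
    (hneg : ∀ t ∈ Set.Ioo (0 : ℝ) tstar, g t < 0)
    (hder : ∀ t₀ ∈ Set.Ioc (0 : ℝ) 1, g t₀ = 0 → 0 < deriv g t₀) :
    ∃! t₁ : ℝ, t₁ ∈ Set.Ioc (0 : ℝ) 1 ∧
      (∀ t ∈ Set.Ioo (0 : ℝ) t₁, g t < 0) ∧ (∀ t ∈ Set.Ioc t₁ 1, 0 < g t) := by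
  have hc : tstar / 2 ∈ Ioo 0 tstar := ⟨half_pos htstar.1, half_lt_self htstar.1⟩
  obtain ⟨t₁, ht₁, hneg₁, hpos₁⟩ := exists_sign_change (hc.2.trans htstar.2)
    (hgcont.mono (Icc_subset_Icc_left hc.1.le)) (hneg _ hc)
    fun t ht => hder t ⟨hc.1.trans ht.1, ht.2⟩
  have hneg₀ : ∀ t ∈ Ioo 0 t₁, g t < 0 := fun t ht =>
    if h : t < tstar / 2 then hneg t ⟨ht.1, h.trans hc.2⟩ else hneg₁ t ⟨not_lt.mp h, ht.2⟩
  have ht₁₀ : t₁ ∈ Ioc 0 1 := ⟨hc.1.trans ht₁.1, ht₁.2⟩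
  refine ⟨t₁, ⟨ht₁₀, hneg₀, hpos₁⟩, fun t₂ ⟨ht₂, hneg₂, hpos₂⟩ => ?_⟩
  exact eq_of_sign_change ht₂ ht₁₀ hneg₂ hpos₂ hneg₀ hpos₁

/-- Let `g : [0,1] → ℝ` be continuous with `g(0) = 0`, differentiable at
every point of `(0,1]`. Suppose there is `t* ∈ (0,1)` with `g < 0` on `(0,t*)`, and
`g'(t₀) > 0` whenever `t₀ ∈ (0,1]` and `g(t₀) = 0`. Then there is a unique `t₁ ∈ (0,1]`
such that `g < 0` on `(0,t₁)` and `g > 0` on `(t₁,1]`. -/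
theorem stmt_7
    (g : ℝ → ℝ)
    (hgcont : ContinuousOn g (Set.Icc (0 : ℝ) 1))
    (hg0 : g 0 = 0)
    (hdiff : ∀ t ∈ Set.Ioc (0 : ℝ) 1, DifferentiableAt ℝ g t)
    (tstar : ℝ) (htstar : tstar ∈ Set.Ioo (0 : ℝ) 1)
    (hneg : ∀ t ∈ Set.Ioo (0 : ℝ) tstar, g t < 0)
    (hder : ∀ t₀ ∈ Set.Ioc (0 : ℝ) 1, g t₀ = 0 → 0 < deriv g t₀) :
    ∃! t₁ : ℝ, t₁ ∈ Set.Ioc (0 : ℝ) 1 ∧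
      (∀ t ∈ Set.Ioo (0 : ℝ) t₁, g t < 0) ∧ (∀ t ∈ Set.Ioc t₁ 1, 0 < g t) :=
  stmt_7_general g hgcont tstar htstar hneg hder
end

section
/- Let r > 2, b ∈ ℝ, M > 0, and let f : ℝ → ℝ be continuous with |f(t)| ≤ M for all t ∈ ℝ and limsup_{t→0, t≠0} f(t)/t ≤ b. Define F(t) := ∫₀ᵗ f(s) ds. Then for every ε > 0 there exists C > 0 such that F(t) ≤ (1/2)(b+ε)t² + C|t|^r for all t ∈ ℝ. -/
/-!
Fix `c = b + ε > b`. The limsup condition gives `δ > 0` with `f s ≤ c s` on `(0, δ)` and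
`f s ≥ c s` on `(-δ, 0)`; integrating, `F t ≤ c t² / 2` for `|t| < δ`. For `|t| ≥ δ` we have
`F t ≤ M |t| ≤ (M / δ) t²` and, since `r > 2`, `t² ≤ |t|^r / δ^(r-2)`, so a large enough `C`
absorbs both `(M / δ) t²` and `|c| t² / 2`.
-/

open Filter Topology Set

lemma exists_pos_forall_div_lt_of_limsup_lt {f : ℝ → ℝ} {c : ℝ}
    (h : limsup (fun t => ((f t / t : ℝ) : EReal)) (𝓝[≠] 0) < c) :
    ∃ δ > 0, ∀ t, t ≠ 0 → |t| < δ → f t / t < c := by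
  obtain ⟨δ, hδ, hball⟩ := Metric.mem_nhdsWithin_iff.mp (eventually_lt_of_limsup_lt h)
  refine ⟨δ, hδ, fun t ht0 htδ => ?_⟩
  have : t ∈ Metric.ball 0 δ ∩ {0}ᶜ := ⟨by simpa [Real.dist_eq] using htδ, ht0⟩
  exact_mod_cast hball this

lemma integral_le_half_mul_sq_of_nonneg {f : ℝ → ℝ} {c t : ℝ} (hf : Continuous f) (ht : 0 ≤ t)
    (h : ∀ s ∈ Ioo 0 t, f s ≤ c * s) :
    ∫ s in 0..t, f s ≤ c / 2 * t ^ 2 := by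
  calc ∫ s in 0..t, f s
      ≤ ∫ s in 0..t, c * s :=
        intervalIntegral.integral_mono_on_of_le_Ioo ht (hf.intervalIntegrable _ _)
          ((continuous_const_mul c).intervalIntegrable _ _) h
    _ = c / 2 * t ^ 2 := by rw [intervalIntegral.integral_const_mul, integral_id]; ring

lemma integral_le_half_mul_sq_of_nonpos {f : ℝ → ℝ} {c t : ℝ} (hf : Continuous f) (ht : t ≤ 0)
    (h : ∀ s ∈ Ioo t 0, c * s ≤ f s) :
    ∫ s in 0..t, f s ≤ c / 2 * t ^ 2 := by
  have hmono : ∫ s in t..0, c * s ≤ ∫ s in t..0, f s :=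
    intervalIntegral.integral_mono_on_of_le_Ioo ht
      ((continuous_const_mul c).intervalIntegrable _ _) (hf.intervalIntegrable _ _) h
  rw [intervalIntegral.integral_const_mul, integral_id] at hmono
  rw [intervalIntegral.integral_symm]
  linarith

lemma integral_le_half_mul_sq_of_div_lt {f : ℝ → ℝ} {c δ t : ℝ} (hf : Continuous f)
    (h : ∀ s, s ≠ 0 → |s| < δ → f s / s < c) (ht : |t| < δ) :
    ∫ s in 0..t, f s ≤ c / 2 * t ^ 2 := by
  rcases le_total 0 t with ht0 | ht0
  · refine integral_le_half_mul_sq_of_nonneg hf ht0 fun s hs => ?_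
    have hsδ : |s| < δ := by rw [abs_of_pos hs.1]; linarith [hs.2, le_abs_self t]
    exact ((div_lt_iff₀ hs.1).mp (h s hs.1.ne' hsδ)).le
  · refine integral_le_half_mul_sq_of_nonpos hf ht0 fun s hs => ?_
    have hsδ : |s| < δ := by rw [abs_of_neg hs.2]; linarith [hs.1, neg_abs_le t]
    exact ((div_lt_iff_of_neg hs.2).mp (h s hs.2.ne hsδ)).le

lemma rpow_sub_two_mul_sq_le_rpow {δ r t : ℝ} (hδ : 0 < δ) (hδt : δ ≤ |t|) (hr : 2 ≤ r) :
    δ ^ (r - 2) * t ^ 2 ≤ |t| ^ r := by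
  have ht : 0 < |t| := hδ.trans_le hδt
  calc δ ^ (r - 2) * t ^ 2
      ≤ |t| ^ (r - 2) * |t| ^ (2 : ℝ) := by
        rw [Real.rpow_two, sq_abs]
        gcongr
    _ = |t| ^ r := by rw [← Real.rpow_add ht]; ring_nf

lemma exists_pos_le_half_mul_sq_add_mul_rpow {F : ℝ → ℝ} {c δ M r : ℝ} (hδ : 0 < δ)
    (hM : 0 ≤ M) (hr : 2 ≤ r) (hsmall : ∀ t, |t| < δ → F t ≤ c / 2 * t ^ 2)
    (hlarge : ∀ t, F t ≤ M * |t|) :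
    ∃ C > 0, ∀ t, F t ≤ c / 2 * t ^ 2 + C * |t| ^ r := by
  set K := M / δ + |c| / 2 with hK
  have hK0 : 0 ≤ K := by positivity
  refine ⟨K / δ ^ (r - 2) + 1, by positivity, fun t => ?_⟩
  have hpow : 0 ≤ (K / δ ^ (r - 2) + 1) * |t| ^ r := by positivity
  rcases lt_or_ge |t| δ with ht | ht
  · linarith [hsmall t ht]
  have hlin : M * |t| ≤ M / δ * t ^ 2 := by
    rw [div_mul_eq_mul_div, le_div_iff₀ hδ, ← sq_abs t, sq, ← mul_assoc]
    exact mul_le_mul_of_nonneg_left ht (mul_nonneg hM (abs_nonneg t))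
  have hquad : K * t ^ 2 ≤ K / δ ^ (r - 2) * |t| ^ r := by
    rw [div_mul_eq_mul_div, le_div_iff₀ (by positivity), mul_assoc]
    exact mul_le_mul_of_nonneg_left (by linarith [rpow_sub_two_mul_sq_le_rpow hδ ht hr]) hK0
  have hc : -|c| / 2 * t ^ 2 ≤ c / 2 * t ^ 2 := by
    gcongr
    linarith [neg_abs_le c]
  have hsplit : K * t ^ 2 = M / δ * t ^ 2 + |c| / 2 * t ^ 2 := by rw [hK]; ring
  have hC : K / δ ^ (r - 2) * |t| ^ r ≤ (K / δ ^ (r - 2) + 1) * |t| ^ r := by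
    gcongr
    linarith
  linarith [hlarge t]

theorem stmt_10_general
    (r b M : ℝ) (hr : 2 < r)
    (f : ℝ → ℝ)
    (hfcont : Continuous f)
    (hbd : ∀ t : ℝ, |f t| ≤ M)
    (hlimsup : Filter.limsup (fun t => ((f t / t : ℝ) : EReal))
      (nhdsWithin 0 {(0 : ℝ)}ᶜ) ≤ (b : EReal))
    (F : ℝ → ℝ)
    (hF : ∀ t : ℝ, F t = ∫ s in (0 : ℝ)..t, f s) :
    ∀ ε > (0 : ℝ), ∃ C > (0 : ℝ), ∀ t : ℝ,
      F t ≤ 1 / 2 * (b + ε) * t ^ 2 + C * |t| ^ r := by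
  intro ε hε
  have hlt : limsup (fun t => ((f t / t : ℝ) : EReal)) (𝓝[≠] 0) < ((b + ε : ℝ) : EReal) :=
    hlimsup.trans_lt (EReal.coe_lt_coe_iff.mpr (by linarith))
  obtain ⟨δ, hδ, hdiv⟩ := exists_pos_forall_div_lt_of_limsup_lt hlt
  have hlarge : ∀ t, F t ≤ M * |t| := fun t => by
    have := intervalIntegral.norm_integral_le_of_norm_le_const (a := 0) (b := t)
      fun x _ => (Real.norm_eq_abs (f x)).trans_le (hbd x)
    rw [hF t]
    simpa using (le_abs_self _).trans this
  have hsmall : ∀ t, |t| < δ → F t ≤ (b + ε) / 2 * t ^ 2 := fun t ht =>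
    (hF t).trans_le (integral_le_half_mul_sq_of_div_lt hfcont hdiv ht)
  obtain ⟨C, hC, hbound⟩ := exists_pos_le_half_mul_sq_add_mul_rpow hδ
    ((abs_nonneg _).trans (hbd 0)) hr.le hsmall hlarge
  exact ⟨C, hC, fun t => by linarith [hbound t]⟩

/-- Let `r > 2`, `b ∈ ℝ`, `M > 0`, and `f : ℝ → ℝ` continuous with
`|f| ≤ M` and `limsup_{t→0, t≠0} f(t)/t ≤ b`. Let `F(t) := ∫₀ᵗ f(s) ds`. Then for every
`ε > 0` there exists `C > 0` such that `F(t) ≤ ½(b+ε)t² + C|t|^r` for all `t`. -/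
theorem stmt_10
    (r b M : ℝ) (hr : 2 < r) (hM : 0 < M)
    (f : ℝ → ℝ)
    (hfcont : Continuous f)
    (hbd : ∀ t : ℝ, |f t| ≤ M)
    (hlimsup : Filter.limsup (fun t => ((f t / t : ℝ) : EReal))
      (nhdsWithin 0 {(0 : ℝ)}ᶜ) ≤ (b : EReal))
    (F : ℝ → ℝ)
    (hF : ∀ t : ℝ, F t = ∫ s in (0 : ℝ)..t, f s) :
    ∀ ε > (0 : ℝ), ∃ C > (0 : ℝ), ∀ t : ℝ,
      F t ≤ 1 / 2 * (b + ε) * t ^ 2 + C * |t| ^ r :=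
  stmt_10_general r b M hr f hfcont hbd hlimsup F hF
end
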